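/- (Straightening/exchange relation on an edge.) For all h, b ∈ H and both sign choices, the edge operators satisfy L^h_± ∘ T^b_± = Σ T^{h₍₁₎ b S(h₍₂₎)}_± ∘ L^{h₍₃₎}_± as operators on H*, realizing on a single edge the commutation relation h b = (h₍₁₎ b S(h₍₂₎)) h₍₃₎ of the mirror bicrossproduct M(H) between the subalgebras 1⊗H and H^cop⊗1. -/

import Mathlib

/-!
Common setup for formalizing "Ribbon operators in the semidual lattice code model"
(Soglohu–Osei–Osumanu).

`H` is a Hopf algebra over `ℂ`.  Its dual Hopf algebra `H*` is realised as
`Module.Dual ℂ H`, with evaluation pairing `⟨h, φ⟩ = φ h`.  The multiplication of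
`H*` is dual to the comultiplication of `H` and the comultiplication of `H*` is
dual to the multiplication of `H`; consequently every edge operator below, given
in the paper by a Sweedler formula on `H*`, is pre-composition
(`LinearMap.dualMap`) with an explicit linear endomorphism of `H`.  For instance
`L^h₊(φ) = ⟨h, S(φ₍₁₎) φ₍₃₎⟩ φ₍₂₎` is exactly `(L^h₊ φ)(x) = Σ φ (S h₍₁₎ * x * h₍₂₎)`.
Since the antipode is assumed involutive (`S⁻¹ = S`), occurrences of `S⁻¹` are
rendered as `S`.
-/

open TensorProduct

noncomputable section

namespace SemidualKitaev

variable {H : Type} [Ring H] [HopfAlgebra ℂ H]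

/-- The antipode of `H`. -/
abbrev S : H →ₗ[ℂ] H := HopfAlgebra.antipode (R := ℂ)

/-- The comultiplication of `H`. -/
abbrev Δ : H →ₗ[ℂ] H ⊗[ℂ] H := Coalgebra.comul (R := ℂ)

/-- The counit of `H`. -/
abbrev ε : H →ₗ[ℂ] ℂ := Coalgebra.counit (R := ℂ)

/-- `sandwich (u ⊗ v) : x ↦ u * x * v`. -/
def sandwich : H ⊗[ℂ] H →ₗ[ℂ] H →ₗ[ℂ] H :=
  TensorProduct.lift <| LinearMap.mk₂ ℂ
    (fun u v => (LinearMap.mulRight ℂ v) ∘ₗ (LinearMap.mulLeft ℂ u))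
    (fun u u' v => LinearMap.ext fun x => by simp [add_mul])
    (fun c u v => LinearMap.ext fun x => by simp [smul_mul_assoc])
    (fun u v v' => LinearMap.ext fun x => by simp [mul_add])
    (fun c u v => LinearMap.ext fun x => by simp [mul_smul_comm])

@[simp] lemma sandwich_tmul (u v x : H) : sandwich (u ⊗ₜ[ℂ] v) x = u * x * v := rfl

/-! ### Edge (triangle) operators on `H* = Module.Dual ℂ H`

Left-module versions (eq. (3.3) of the paper). -/

/-- `L^h₊(φ) = ⟨h, S(φ₍₁₎) φ₍₃₎⟩ φ₍₂₎`, i.e. `(L^h₊ φ)(x) = Σ φ (S h₍₁₎ * x * h₍₂₎)`. -/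
def Lp (h : H) : Module.Dual ℂ H →ₗ[ℂ] Module.Dual ℂ H :=
  (sandwich ((TensorProduct.map S LinearMap.id) (Δ h))).dualMap

/-- `L^h₋(φ) = ⟨h, φ₍₃₎ S⁻¹(φ₍₁₎)⟩ φ₍₂₎`, i.e. `(L^h₋ φ)(x) = Σ φ (S⁻¹ h₍₂₎ * x * h₍₁₎)`,
with `S⁻¹ = S`. -/
def Lm (h : H) : Module.Dual ℂ H →ₗ[ℂ] Module.Dual ℂ H :=
  (sandwich ((TensorProduct.map S LinearMap.id) ((TensorProduct.comm ℂ H H) (Δ h)))).dualMap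

/-- `T^a₊(φ) = ⟨S a, φ₍₁₎⟩ φ₍₂₎`, i.e. `(T^a₊ φ)(x) = φ (S a * x)`. -/
def Tp (a : H) : Module.Dual ℂ H →ₗ[ℂ] Module.Dual ℂ H :=
  (LinearMap.mulLeft ℂ (S a)).dualMap

/-- `T^a₋(φ) = ⟨a, φ₍₂₎⟩ φ₍₁₎`, i.e. `(T^a₋ φ)(x) = φ (x * a)`. -/
def Tm (a : H) : Module.Dual ℂ H →ₗ[ℂ] Module.Dual ℂ H :=
  (LinearMap.mulRight ℂ a).dualMap

/-! Right-module versions (eq. (3.14) of the paper). -/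

/-- `L̃^h₊(φ) = ⟨h, S(φ₍₃₎) φ₍₁₎⟩ φ₍₂₎`, i.e. `(L̃^h₊ φ)(x) = Σ φ (h₍₂₎ * x * S h₍₁₎)`. -/
def Ltp (h : H) : Module.Dual ℂ H →ₗ[ℂ] Module.Dual ℂ H :=
  (sandwich ((TensorProduct.map LinearMap.id S) ((TensorProduct.comm ℂ H H) (Δ h)))).dualMap

/-- `L̃^h₋(φ) = ⟨h, φ₍₁₎ S⁻¹(φ₍₃₎)⟩ φ₍₂₎`, i.e. `(L̃^h₋ φ)(x) = Σ φ (h₍₁₎ * x * S⁻¹ h₍₂₎)`,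
with `S⁻¹ = S`. -/
def Ltm (h : H) : Module.Dual ℂ H →ₗ[ℂ] Module.Dual ℂ H :=
  (sandwich ((TensorProduct.map LinearMap.id S) (Δ h))).dualMap

/-- `T̃^a₊(φ) = ⟨a, φ₍₁₎⟩ φ₍₂₎`, i.e. `(T̃^a₊ φ)(x) = φ (a * x)`. -/
def Ttp (a : H) : Module.Dual ℂ H →ₗ[ℂ] Module.Dual ℂ H :=
  (LinearMap.mulLeft ℂ a).dualMap

/-- `T̃^a₋(φ) = ⟨S⁻¹ a, φ₍₂₎⟩ φ₍₁₎`, i.e. `(T̃^a₋ φ)(x) = φ (x * S⁻¹ a)`, with `S⁻¹ = S`. -/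
def Ttm (a : H) : Module.Dual ℂ H →ₗ[ℂ] Module.Dual ℂ H :=
  (LinearMap.mulRight ℂ (S a)).dualMap

/-- The antipode `S_{H*}` of the dual Hopf algebra: `S_{H*}(φ) = φ ∘ S`. -/
def Sdual : Module.Dual ℂ H →ₗ[ℂ] Module.Dual ℂ H := (S (H := H)).dualMap

/-- The composite edge operator `M^{(a,h)}₊ = T^a₊ ∘ L^h₊`. -/
def Mp (a h : H) : Module.Dual ℂ H →ₗ[ℂ] Module.Dual ℂ H := Tp a ∘ₗ Lp h

/-- The composite edge operator `M^{(a,h)}₋ = T^a₋ ∘ L^h₋`. -/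
def Mm (a h : H) : Module.Dual ℂ H →ₗ[ℂ] Module.Dual ℂ H := Tm a ∘ₗ Lm h

/-- The right action of `M(H)` on `H*` (eq. (2.10) of the paper):
`φ ◁ (a ⊗ h) = ⟨a h₍₁₎, φ₍₁₎⟩ ⟨S h₍₂₎, φ₍₃₎⟩ φ₍₂₎`,
i.e. `(ract φ a h)(x) = Σ φ (a * h₍₁₎ * x * S h₍₂₎)`. -/
def ract (φ : Module.Dual ℂ H) (a h : H) : Module.Dual ℂ H :=
  (sandwich ((TensorProduct.map (LinearMap.mulLeft ℂ a) S) (Δ h))).dualMap φ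

/-- The (convolution) multiplication of the dual Hopf algebra `H*`:
`(φ ∗ ψ)(x) = Σ φ(x₍₁₎) ψ(x₍₂₎)`. -/
def dualMul (φ ψ : Module.Dual ℂ H) : Module.Dual ℂ H :=
  (LinearMap.mul' ℂ ℂ) ∘ₗ (TensorProduct.map φ ψ) ∘ₗ Δ

/-- The opposite multiplication `∗op` of `H*`. -/
def dualMulOp (φ ψ : Module.Dual ℂ H) : Module.Dual ℂ H := dualMul ψ φ

/-! ### Iterated comultiplications, `Δⁿ h = Σ h₍₁₎ ⊗ (h₍₂₎ ⊗ (⋯ ⊗ h₍ₙ₊₁₎))` -/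

def Δ2 : H →ₗ[ℂ] H ⊗[ℂ] (H ⊗[ℂ] H) := (LinearMap.lTensor H Δ) ∘ₗ Δ
def Δ3 : H →ₗ[ℂ] H ⊗[ℂ] (H ⊗[ℂ] (H ⊗[ℂ] H)) := (LinearMap.lTensor H Δ2) ∘ₗ Δ
def Δ4 : H →ₗ[ℂ] H ⊗[ℂ] (H ⊗[ℂ] (H ⊗[ℂ] (H ⊗[ℂ] H))) := (LinearMap.lTensor H Δ3) ∘ₗ Δ
def Δ5 : H →ₗ[ℂ] H ⊗[ℂ] (H ⊗[ℂ] (H ⊗[ℂ] (H ⊗[ℂ] (H ⊗[ℂ] H)))) :=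
  (LinearMap.lTensor H Δ4) ∘ₗ Δ
def Δ6 : H →ₗ[ℂ] H ⊗[ℂ] (H ⊗[ℂ] (H ⊗[ℂ] (H ⊗[ℂ] (H ⊗[ℂ] (H ⊗[ℂ] H))))) :=
  (LinearMap.lTensor H Δ5) ∘ₗ Δ
def Δ7 : H →ₗ[ℂ] H ⊗[ℂ] (H ⊗[ℂ] (H ⊗[ℂ] (H ⊗[ℂ] (H ⊗[ℂ] (H ⊗[ℂ] (H ⊗[ℂ] H)))))) :=
  (LinearMap.lTensor H Δ6) ∘ₗ Δ
def Δ8 : H →ₗ[ℂ]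
    H ⊗[ℂ] (H ⊗[ℂ] (H ⊗[ℂ] (H ⊗[ℂ] (H ⊗[ℂ] (H ⊗[ℂ] (H ⊗[ℂ] (H ⊗[ℂ] H))))))) :=
  (LinearMap.lTensor H Δ7) ∘ₗ Δ
def Δ9 : H →ₗ[ℂ]
    H ⊗[ℂ] (H ⊗[ℂ] (H ⊗[ℂ] (H ⊗[ℂ] (H ⊗[ℂ] (H ⊗[ℂ] (H ⊗[ℂ] (H ⊗[ℂ] (H ⊗[ℂ] H)))))))) :=
  (LinearMap.lTensor H Δ8) ∘ₗ Δ

lemma mulLeft_add (a a' : H) :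
    LinearMap.mulLeft ℂ (a + a') = LinearMap.mulLeft ℂ a + LinearMap.mulLeft ℂ a' :=
  LinearMap.ext fun x => add_mul a a' x

lemma mulLeft_smul (c : ℂ) (a : H) :
    LinearMap.mulLeft ℂ (c • a) = c • LinearMap.mulLeft ℂ a :=
  LinearMap.ext fun x => smul_mul_assoc c a x

/-! ### The mirror bicrossproduct `M(H) = H^cop ⋈ H` on the vector space `H ⊗ H` -/

/-- `(h₍₁₎ ⊗ h₍₂₎) ⊗ h₍₃₎` version of the 2-fold comultiplication. -/
def Δ2' : H →ₗ[ℂ] (H ⊗[ℂ] H) ⊗[ℂ] H := (LinearMap.rTensor H Δ) ∘ₗ Δ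

/-- `mulAction2 ((u ⊗ v) ⊗ w) (b ⊗ g) = (u * b * v) ⊗ (w * g)`. -/
def mulAction2 : (H ⊗[ℂ] H) ⊗[ℂ] H →ₗ[ℂ] (H ⊗[ℂ] H) →ₗ[ℂ] (H ⊗[ℂ] H) :=
  TensorProduct.lift <| LinearMap.mk₂ ℂ
    (fun (uv : H ⊗[ℂ] H) (w : H) =>
      TensorProduct.map (sandwich uv) (LinearMap.mulLeft ℂ w))
    (fun uv uv' w => by (try dsimp only); rw [map_add, TensorProduct.map_add_left])
    (fun c uv w => by (try dsimp only); rw [map_smul, TensorProduct.map_smul_left])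
    (fun uv w w' => by (try dsimp only); rw [mulLeft_add, TensorProduct.map_add_right])
    (fun c uv w => by (try dsimp only); rw [mulLeft_smul, TensorProduct.map_smul_right])

/-- The product of the mirror bicrossproduct `M(H)`:
`μM (a ⊗ h) (b ⊗ g) = Σ (a * h₍₁₎ * b * S h₍₂₎) ⊗ (h₍₃₎ * g)`. -/
def μM : (H ⊗[ℂ] H) →ₗ[ℂ] (H ⊗[ℂ] H) →ₗ[ℂ] (H ⊗[ℂ] H) :=
  TensorProduct.lift <| LinearMap.mk₂ ℂ
    (fun (a h : H) =>
      mulAction2 ((TensorProduct.map (TensorProduct.map (LinearMap.mulLeft ℂ a) S)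
        LinearMap.id) (Δ2' h)))
    (fun a a' h => by
      try dsimp only
      rw [mulLeft_add, TensorProduct.map_add_left, TensorProduct.map_add_left,
        LinearMap.add_apply, map_add])
    (fun c a h => by
      try dsimp only
      rw [mulLeft_smul, TensorProduct.map_smul_left, TensorProduct.map_smul_left,
        LinearMap.smul_apply, map_smul])
    (fun a h h' => by (try dsimp only); rw [map_add, map_add, map_add])
    (fun c a h => by (try dsimp only); rw [map_smul, map_smul, map_smul])

/-- The unit `1 ⊗ 1` of `M(H)`. -/
def oneM : H ⊗[ℂ] H := (1 : H) ⊗ₜ[ℂ] (1 : H)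

/-- The counit of `M(H)`: `εM (a ⊗ h) = ε a * ε h`. -/
def εM : H ⊗[ℂ] H →ₗ[ℂ] ℂ :=
  (TensorProduct.lid ℂ ℂ).toLinearMap ∘ₗ TensorProduct.map ε ε

/-- Auxiliary map for the coproduct of `M(H)`: for fixed `a₁, a₂`, it sends
`h₁ ⊗ (h₂ ⊗ (h₃ ⊗ h₄))` to `(a₂ ⊗ h₂) ⊗ ((a₁ * h₁ * S h₃) ⊗ h₄)`. -/
def deltaMAux (a₁ a₂ : H) :
    H ⊗[ℂ] (H ⊗[ℂ] (H ⊗[ℂ] H)) →ₗ[ℂ] (H ⊗[ℂ] H) ⊗[ℂ] (H ⊗[ℂ] H) :=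
  (TensorProduct.map (TensorProduct.mk ℂ H H a₂) LinearMap.id) ∘ₗ
  (TensorProduct.map LinearMap.id
    (TensorProduct.map (LinearMap.mul' ℂ H) LinearMap.id)) ∘ₗ
  (TensorProduct.map LinearMap.id (TensorProduct.assoc ℂ H H H).symm.toLinearMap) ∘ₗ
  (TensorProduct.assoc ℂ H H (H ⊗[ℂ] H)).toLinearMap ∘ₗ
  (TensorProduct.map (TensorProduct.comm ℂ H H).toLinearMap LinearMap.id) ∘ₗ
  (TensorProduct.assoc ℂ H H (H ⊗[ℂ] H)).symm.toLinearMap ∘ₗ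
  (TensorProduct.map (LinearMap.mulLeft ℂ a₁)
    (TensorProduct.map LinearMap.id (TensorProduct.map S LinearMap.id)))

lemma deltaMAux_add_left (a₁ a₁' a₂ : H) :
    deltaMAux (a₁ + a₁') a₂ = deltaMAux a₁ a₂ + deltaMAux (H := H) a₁' a₂ := by
  unfold deltaMAux
  rw [mulLeft_add, TensorProduct.map_add_left]
  simp only [LinearMap.comp_add]

lemma deltaMAux_smul_left (c : ℂ) (a₁ a₂ : H) :
    deltaMAux (c • a₁) a₂ = c • deltaMAux (H := H) a₁ a₂ := by
  unfold deltaMAux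
  rw [mulLeft_smul, TensorProduct.map_smul_left]
  simp only [LinearMap.comp_smul]

lemma deltaMAux_add_right (a₁ a₂ a₂' : H) :
    deltaMAux a₁ (a₂ + a₂') = deltaMAux a₁ a₂ + deltaMAux (H := H) a₁ a₂' := by
  unfold deltaMAux
  rw [map_add, TensorProduct.map_add_left]
  simp only [LinearMap.add_comp]

lemma deltaMAux_smul_right (c : ℂ) (a₁ a₂ : H) :
    deltaMAux a₁ (c • a₂) = c • deltaMAux (H := H) a₁ a₂ := by
  unfold deltaMAux
  rw [map_smul, TensorProduct.map_smul_left]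
  simp only [LinearMap.smul_comp]

/-- `deltaG (a₁ ⊗ a₂) = deltaMAux a₁ a₂`, assembled linearly. -/
def deltaG : H ⊗[ℂ] H →ₗ[ℂ]
    (H ⊗[ℂ] (H ⊗[ℂ] (H ⊗[ℂ] H)) →ₗ[ℂ] (H ⊗[ℂ] H) ⊗[ℂ] (H ⊗[ℂ] H)) :=
  TensorProduct.lift <| LinearMap.mk₂ ℂ deltaMAux
    deltaMAux_add_left deltaMAux_smul_left deltaMAux_add_right deltaMAux_smul_right

/-- The coproduct of `M(H)`:
`ΔM (a ⊗ h) = Σ (a₍₂₎ ⊗ h₍₂₎) ⊗ ((a₍₁₎ * h₍₁₎ * S h₍₃₎) ⊗ h₍₄₎)`. -/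
def ΔM : H ⊗[ℂ] H →ₗ[ℂ] (H ⊗[ℂ] H) ⊗[ℂ] (H ⊗[ℂ] H) :=
  TensorProduct.lift <| LinearMap.mk₂ ℂ
    (fun (a h : H) => (deltaG (Δ a)) (Δ3 h))
    (fun a a' h => by (try dsimp only); rw [map_add, map_add, LinearMap.add_apply])
    (fun c a h => by (try dsimp only); rw [map_smul, map_smul, LinearMap.smul_apply])
    (fun a h h' => by (try dsimp only); rw [map_add, map_add])
    (fun c a h => by (try dsimp only); rw [map_smul, map_smul])

/-- The componentwise (tensor-square) product on `M(H) ⊗ M(H)`. -/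
def tensorMul2 :
    ((H ⊗[ℂ] H) ⊗[ℂ] (H ⊗[ℂ] H)) →ₗ[ℂ] ((H ⊗[ℂ] H) ⊗[ℂ] (H ⊗[ℂ] H)) →ₗ[ℂ]
      ((H ⊗[ℂ] H) ⊗[ℂ] (H ⊗[ℂ] H)) :=
  TensorProduct.lift <| LinearMap.mk₂ ℂ
    (fun (u v : H ⊗[ℂ] H) => TensorProduct.map (μM u) (μM v))
    (fun u u' v => by (try dsimp only); rw [map_add, TensorProduct.map_add_left])
    (fun c u v => by (try dsimp only); rw [map_smul, TensorProduct.map_smul_left])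
    (fun u v v' => by (try dsimp only); rw [map_add, TensorProduct.map_add_right])
    (fun c u v => by (try dsimp only); rw [map_smul, TensorProduct.map_smul_right])

/-- The antipode candidate of `M(H)`:
`SM (a ⊗ h) = Σ (1 ⊗ S h₍₂₎) · (S (a * h₍₁₎ * S h₍₃₎) ⊗ 1)`,
where `·` is the mirror product `μM`. -/
def SM : H ⊗[ℂ] H →ₗ[ℂ] H ⊗[ℂ] H :=
  TensorProduct.lift <| LinearMap.mk₂ ℂ
    (fun (a h : H) =>
      (TensorProduct.lift μM)
        ((TensorProduct.map
            ((TensorProduct.mk ℂ H H 1) ∘ₗ S)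
            (((TensorProduct.mk ℂ H H).flip 1) ∘ₗ S ∘ₗ (LinearMap.mul' ℂ H) ∘ₗ
              (TensorProduct.map (LinearMap.mulLeft ℂ a) S)))
          ((TensorProduct.assoc ℂ H H H).toLinearMap
            ((TensorProduct.map (TensorProduct.comm ℂ H H).toLinearMap LinearMap.id)
              ((TensorProduct.assoc ℂ H H H).symm.toLinearMap (Δ2 h))))))
    (fun a a' h => by
      try dsimp only
      rw [mulLeft_add, TensorProduct.map_add_left, LinearMap.comp_add, LinearMap.comp_add,
        LinearMap.comp_add, TensorProduct.map_add_right, LinearMap.add_apply, map_add])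
    (fun c a h => by
      try dsimp only
      rw [mulLeft_smul, TensorProduct.map_smul_left, LinearMap.comp_smul, LinearMap.comp_smul,
        LinearMap.comp_smul, TensorProduct.map_smul_right, LinearMap.smul_apply, map_smul])
    (fun a h h' => by (try dsimp only); simp only [map_add])
    (fun c a h => by (try dsimp only); simp only [map_smul])

/-- `ℓ ∈ H` is a normalized (two-sided) Haar integral:
`x ℓ = ε(x) ℓ = ℓ x` for all `x`, and `ε(ℓ) = 1`. -/
def IsHaarIntegral (ℓ : H) : Prop :=
  ε ℓ = 1 ∧ ∀ x : H, x * ℓ = ε x • ℓ ∧ ℓ * x = ε x • ℓ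

/-- Fourfold tensor product of operators on `H*`, acting on the four edges
`ψ¹ ⊗ (ψ² ⊗ (ψ³ ⊗ ψ⁴))`. -/
def map4 (f₁ f₂ f₃ f₄ : Module.Dual ℂ H →ₗ[ℂ] Module.Dual ℂ H) :
    Module.Dual ℂ H ⊗[ℂ] (Module.Dual ℂ H ⊗[ℂ] (Module.Dual ℂ H ⊗[ℂ] Module.Dual ℂ H))
      →ₗ[ℂ]
    Module.Dual ℂ H ⊗[ℂ] (Module.Dual ℂ H ⊗[ℂ] (Module.Dual ℂ H ⊗[ℂ] Module.Dual ℂ H)) :=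
  TensorProduct.map f₁ (TensorProduct.map f₂ (TensorProduct.map f₃ f₄))


section AuxHopf

set_option synthInstance.maxHeartbeats 1000000
set_option maxHeartbeats 1000000

open Coalgebra LinearMap

/-- `S 1 = 1`. -/
lemma S_one : S (1 : H) = 1 := by
  have h := HopfAlgebra.mul_antipode_rTensor_comul_apply (R := ℂ) (A := H) 1
  simpa [Algebra.TensorProduct.one_def] using h

/-- Collapse `∑ ε(x₂) • x₁ = x`. -/
lemma counit_right_collapse {x : H} {ι : Type*} (r : Coalgebra.Repr ℂ x ι) :
    ∑ i ∈ r.index, ε (r.right i) • r.left i = x := by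
  have h := Coalgebra.sum_tmul_counit_eq (R := ℂ) r
  calc ∑ i ∈ r.index, ε (r.right i) • r.left i
      = ∑ i ∈ r.index, TensorProduct.rid ℂ H (r.left i ⊗ₜ[ℂ] ε (r.right i)) := by
        simp
    _ = TensorProduct.rid ℂ H (x ⊗ₜ[ℂ] (1 : ℂ)) := by rw [← map_sum, h]
    _ = x := by simp

/-- Collapse `∑ ε(x₁) • x₂ = x`. -/
lemma counit_left_collapse {x : H} {ι : Type*} (r : Coalgebra.Repr ℂ x ι) :
    ∑ i ∈ r.index, ε (r.left i) • r.right i = x := by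
  have h := Coalgebra.sum_counit_tmul_eq (R := ℂ) r
  calc ∑ i ∈ r.index, ε (r.left i) • r.right i
      = ∑ i ∈ r.index, TensorProduct.lid ℂ H (ε (r.left i) ⊗ₜ[ℂ] r.right i) := by
        simp
    _ = TensorProduct.lid ℂ H ((1 : ℂ) ⊗ₜ[ℂ] x) := by rw [← map_sum, h]
    _ = x := by simp

/-- A representation of `Δ (x * y)` from representations of `Δ x` and `Δ y`. -/
def reprMul {x y : H} {ι κ : Type*} (rx : Coalgebra.Repr ℂ x ι) (ry : Coalgebra.Repr ℂ y κ) :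
    Coalgebra.Repr ℂ (x * y) (ι × κ) where
  index := rx.index ×ˢ ry.index
  left := fun p => rx.left p.1 * ry.left p.2
  right := fun p => rx.right p.1 * ry.right p.2
  eq := by
    rw [Finset.sum_product]
    rw [show Coalgebra.comul (R := ℂ) (x * y) = Coalgebra.comul (R := ℂ) x * Coalgebra.comul y
      from Bialgebra.comul_mul x y, ← rx.eq, ← ry.eq, Finset.sum_mul_sum]
    simp [Algebra.TensorProduct.tmul_mul_tmul]

/-- Coassociativity collapse: `∑ (S x₁ * x₂) ⊗ x₃ = 1 ⊗ x`. -/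
lemma K1 {x : H} {ι κ : Type*} (r : Coalgebra.Repr ℂ x ι) (r2 : ∀ i : ι, Coalgebra.Repr ℂ (r.right i) κ) :
    ∑ i ∈ r.index, ∑ k ∈ (r2 i).index,
      (S (r.left i) * (r2 i).left k) ⊗ₜ[ℂ] (r2 i).right k = (1 : H) ⊗ₜ[ℂ] x := by
  classical
  set r1 : ∀ i : ι, Coalgebra.Repr ℂ (r.left i) (H × H) := fun i => Coalgebra.Repr.arbitrary ℂ _
    with hr1
  have hco := Coalgebra.sum_tmul_tmul_eq (R := ℂ) r r1 r2
  set F : H ⊗[ℂ] (H ⊗[ℂ] H) →ₗ[ℂ] H ⊗[ℂ] H :=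
    ((LinearMap.mul' ℂ H ∘ₗ LinearMap.rTensor H S).rTensor H) ∘ₗ
      (TensorProduct.assoc ℂ H H H).symm.toLinearMap with hF
  have hFtmul : ∀ a u v : H, F (a ⊗ₜ[ℂ] (u ⊗ₜ[ℂ] v)) = (S a * u) ⊗ₜ[ℂ] v := by
    intro a u v; simp [hF]
  calc ∑ i ∈ r.index, ∑ k ∈ (r2 i).index,
        (S (r.left i) * (r2 i).left k) ⊗ₜ[ℂ] (r2 i).right k
      = F (∑ i ∈ r.index, ∑ k ∈ (r2 i).index,
          r.left i ⊗ₜ[ℂ] ((r2 i).left k ⊗ₜ[ℂ] (r2 i).right k)) := by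
        simp only [map_sum, hFtmul]
    _ = F (∑ i ∈ r.index, ∑ j ∈ (r1 i).index,
          (r1 i).left j ⊗ₜ[ℂ] ((r1 i).right j ⊗ₜ[ℂ] r.right i)) := by rw [hco]
    _ = ∑ i ∈ r.index, (∑ j ∈ (r1 i).index,
          S ((r1 i).left j) * (r1 i).right j) ⊗ₜ[ℂ] r.right i := by
        simp only [map_sum, hFtmul, TensorProduct.sum_tmul]
    _ = ∑ i ∈ r.index, (1 : H) ⊗ₜ[ℂ] (ε (r.left i) • r.right i) := by
        refine Finset.sum_congr rfl fun i _ => ?_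
        rw [HopfAlgebra.sum_antipode_mul_eq_smul (r1 i)]
        rw [TensorProduct.smul_tmul]
    _ = (1 : H) ⊗ₜ[ℂ] x := by
        rw [← TensorProduct.tmul_sum, counit_left_collapse r]

@[simp] lemma auxTheta_tmul (c d e u v : H) :
    (LinearMap.mulLeft ℂ c ∘ₗ LinearMap.mul' ℂ H ∘ₗ
      TensorProduct.map LinearMap.id (LinearMap.mulLeft ℂ d ∘ₗ S ∘ₗ LinearMap.mulRight ℂ e))
      (u ⊗ₜ[ℂ] v) = c * (u * (d * S (v * e))) := by
  simp

@[simp] lemma auxPsi_tmul (e u v : H) :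
    (LinearMap.mul' ℂ H ∘ₗ TensorProduct.map LinearMap.id (S ∘ₗ LinearMap.mulLeft ℂ e))
      (u ⊗ₜ[ℂ] v) = u * S (e * v) := by
  simp

/-- Antipode is anti-multiplicative. -/
lemma S_mul (x y : H) : S (x * y) = S y * S x := by
  classical
  set rx := Coalgebra.Repr.arbitrary ℂ x with hrx
  set ry := Coalgebra.Repr.arbitrary ℂ y with hry
  set rx2 : ∀ i : H × H, Coalgebra.Repr ℂ (rx.right i) (H × H) :=
    fun i => Coalgebra.Repr.arbitrary ℂ _ with hrx2
  set ry2 : ∀ j : H × H, Coalgebra.Repr ℂ (ry.right j) (H × H) :=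
    fun j => Coalgebra.Repr.arbitrary ℂ _ with hry2
  have claimA : S y * S x =
      ∑ j ∈ ry.index, ∑ i ∈ rx.index, ∑ k ∈ (rx2 i).index, ∑ l ∈ (ry2 j).index,
        S (ry.left j) * (S (rx.left i) * ((rx2 i).left k * ((ry2 j).left l *
          S ((rx2 i).right k * (ry2 j).right l)))) := by
    have hSy : S y = ∑ j ∈ ry.index, ε (ry.right j) • S (ry.left j) := by
      conv_lhs => rw [← counit_right_collapse ry]
      rw [map_sum]; simp
    have hSx : S x = ∑ i ∈ rx.index, ε (rx.right i) • S (rx.left i) := by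
      conv_lhs => rw [← counit_right_collapse rx]
      rw [map_sum]; simp
    rw [hSy, hSx, Finset.sum_mul_sum]
    refine Finset.sum_congr rfl fun j _ => Finset.sum_congr rfl fun i _ => ?_
    have h1 : (ε (ry.right j) • S (ry.left j)) * (ε (rx.right i) • S (rx.left i))
        = (S (ry.left j) * S (rx.left i)) * ((ε (rx.right i * ry.right j)) • (1 : H)) := by
      rw [Bialgebra.counit_mul]
      rw [smul_mul_smul_comm]
      rw [mul_smul_comm, mul_one]
      rw [mul_comm (ε (rx.right i)) (ε (ry.right j))]
    rw [h1, ← HopfAlgebra.sum_mul_antipode_eq_smul (reprMul (rx2 i) (ry2 j)),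
      Finset.mul_sum]
    show (∑ p ∈ (rx2 i).index ×ˢ (ry2 j).index,
        S (ry.left j) * S (rx.left i) *
          (((rx2 i).left p.1 * (ry2 j).left p.2) *
            S ((rx2 i).right p.1 * (ry2 j).right p.2))) = _
    rw [Finset.sum_product]
    refine Finset.sum_congr rfl fun k _ => Finset.sum_congr rfl fun l _ => ?_
    show (S (ry.left j) * S (rx.left i)) *
        (((rx2 i).left k * (ry2 j).left l) * S ((rx2 i).right k * (ry2 j).right l)) = _
    simp [mul_assoc]
  have claimB :
      (∑ j ∈ ry.index, ∑ i ∈ rx.index, ∑ k ∈ (rx2 i).index, ∑ l ∈ (ry2 j).index,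
        S (ry.left j) * (S (rx.left i) * ((rx2 i).left k * ((ry2 j).left l *
          S ((rx2 i).right k * (ry2 j).right l))))) = S (x * y) := by
    have step1 : ∀ j ∈ ry.index,
        (∑ i ∈ rx.index, ∑ k ∈ (rx2 i).index, ∑ l ∈ (ry2 j).index,
          S (ry.left j) * (S (rx.left i) * ((rx2 i).left k * ((ry2 j).left l *
            S ((rx2 i).right k * (ry2 j).right l)))))
        = ∑ l ∈ (ry2 j).index,
            S (ry.left j) * ((ry2 j).left l * S (x * (ry2 j).right l)) := by
      intro j _
      have hswap : (∑ i ∈ rx.index, ∑ k ∈ (rx2 i).index, ∑ l ∈ (ry2 j).index,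
          S (ry.left j) * (S (rx.left i) * ((rx2 i).left k * ((ry2 j).left l *
            S ((rx2 i).right k * (ry2 j).right l)))))
          = ∑ l ∈ (ry2 j).index, ∑ i ∈ rx.index, ∑ k ∈ (rx2 i).index,
            S (ry.left j) * (S (rx.left i) * ((rx2 i).left k * ((ry2 j).left l *
              S ((rx2 i).right k * (ry2 j).right l)))) := by
        rw [Finset.sum_comm]
        exact Finset.sum_congr rfl fun i _ => Finset.sum_comm
      rw [hswap]
      refine Finset.sum_congr rfl fun l _ => ?_
      have hx1 := K1 rx rx2
      have := congrArg
        (LinearMap.mulLeft ℂ (S (ry.left j)) ∘ₗ LinearMap.mul' ℂ H ∘ₗ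
          TensorProduct.map LinearMap.id (LinearMap.mulLeft ℂ ((ry2 j).left l) ∘ₗ S ∘ₗ
            LinearMap.mulRight ℂ ((ry2 j).right l))) hx1
      simp only [map_sum, auxTheta_tmul, one_mul] at this
      rw [← this]
      refine Finset.sum_congr rfl fun i _ => Finset.sum_congr rfl fun k _ => ?_
      simp [mul_assoc]
    calc (∑ j ∈ ry.index, ∑ i ∈ rx.index, ∑ k ∈ (rx2 i).index, ∑ l ∈ (ry2 j).index,
        S (ry.left j) * (S (rx.left i) * ((rx2 i).left k * ((ry2 j).left l *
          S ((rx2 i).right k * (ry2 j).right l)))))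
        = ∑ j ∈ ry.index, ∑ l ∈ (ry2 j).index,
            S (ry.left j) * ((ry2 j).left l * S (x * (ry2 j).right l)) :=
          Finset.sum_congr rfl step1
      _ = S (x * y) := by
          have hy1 := K1 ry ry2
          have := congrArg
            (LinearMap.mul' ℂ H ∘ₗ
              TensorProduct.map LinearMap.id (S ∘ₗ LinearMap.mulLeft ℂ x)) hy1
          simp only [map_sum, auxPsi_tmul, one_mul] at this
          rw [← this]
          refine Finset.sum_congr rfl fun j _ => Finset.sum_congr rfl fun l _ => ?_
          simp [mul_assoc]
  rw [claimA, claimB]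

/-! ### Maps for the plus-case exchange relation -/

/-- `innP (c ⊗ x) = S x * c`. -/
def innP : H ⊗[ℂ] H →ₗ[ℂ] H :=
  LinearMap.mul' ℂ H ∘ₗ LinearMap.rTensor H S ∘ₗ (TensorProduct.comm ℂ H H).toLinearMap

@[simp] lemma innP_tmul (c x : H) : innP (c ⊗ₜ[ℂ] x) = S x * c := rfl

/-- `GP (c ⊗ d) = ∑ (S d₁ * c) ⊗ d₂`. -/
def GP : H ⊗[ℂ] H →ₗ[ℂ] H ⊗[ℂ] H :=
  LinearMap.rTensor H innP ∘ₗ (TensorProduct.assoc ℂ H H H).symm.toLinearMap ∘ₗ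
    LinearMap.lTensor H Δ

/-- `outP b (a ⊗ u) = u * S b * S a`. -/
def outP (b : H) : H ⊗[ℂ] H →ₗ[ℂ] H :=
  LinearMap.mul' ℂ H ∘ₗ TensorProduct.map (LinearMap.mulRight ℂ (S b)) S ∘ₗ
    (TensorProduct.comm ℂ H H).toLinearMap

@[simp] lemma outP_tmul (b a u : H) : outP b (a ⊗ₜ[ℂ] u) = u * S b * S a := rfl

/-- `cOutP b (a ⊗ (u ⊗ v)) = (u * S b * S a) ⊗ v`. -/
def cOutP (b : H) : H ⊗[ℂ] (H ⊗[ℂ] H) →ₗ[ℂ] H ⊗[ℂ] H :=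
  LinearMap.rTensor H (outP b) ∘ₗ (TensorProduct.assoc ℂ H H H).symm.toLinearMap

@[simp] lemma cOutP_tmul (b a u v : H) :
    cOutP b (a ⊗ₜ[ℂ] (u ⊗ₜ[ℂ] v)) = (u * S b * S a) ⊗ₜ[ℂ] v := rfl

def bigMapP (b : H) : H ⊗[ℂ] (H ⊗[ℂ] H) →ₗ[ℂ] H ⊗[ℂ] H :=
  cOutP b ∘ₗ LinearMap.lTensor H GP

/-- With `S ∘ S = id`, `∑ S v₂ * v₁ = ε v • 1`. -/
lemma innP_comul (hS : ∀ x : H, S (S x) = x) (v : H) :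
    innP (Δ v) = ε v • (1 : H) := by
  have key : ∀ t : H ⊗[ℂ] H, innP t = S (LinearMap.mul' ℂ H (LinearMap.rTensor H S t)) := by
    intro t
    induction t with
    | zero => simp
    | tmul u v => simp [S_mul, hS]
    | add t₁ t₂ ih₁ ih₂ => simp [ih₁, ih₂]
  rw [key, HopfAlgebra.mul_antipode_rTensor_comul_apply, Algebra.algebraMap_eq_smul_one,
    map_smul, S_one]

lemma innP_comp_comul (hS : ∀ x : H, S (S x) = x) :
    (innP : H ⊗[ℂ] H →ₗ[ℂ] H) ∘ₗ Δ = Algebra.linearMap ℂ H ∘ₗ ε := by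
  refine LinearMap.ext fun v => ?_
  simp [innP_comul hS, Algebra.algebraMap_eq_smul_one]

/-- `GP (Δ v) = 1 ⊗ v`. -/
lemma GP_comul (hS : ∀ x : H, S (S x) = x) (v : H) :
    GP (Δ v) = (1 : H) ⊗ₜ[ℂ] v := by
  have h1 : GP (Δ v) = LinearMap.rTensor H innP
      ((TensorProduct.assoc ℂ H H H).symm
        ((Coalgebra.comul (R := ℂ)).lTensor H (Coalgebra.comul v))) := rfl
  rw [h1, Coalgebra.coassoc_symm_apply, ← LinearMap.comp_apply, ← LinearMap.rTensor_comp,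
    innP_comp_comul hS, LinearMap.rTensor_comp, LinearMap.comp_apply,
    Coalgebra.rTensor_counit_comul]
  simp

lemma GP_comp_comul (hS : ∀ x : H, S (S x) = x) :
    GP ∘ₗ (Δ : H →ₗ[ℂ] H ⊗[ℂ] H) = TensorProduct.mk ℂ H H 1 :=
  LinearMap.ext fun v => GP_comul hS v

lemma FCP (b : H) (t : H ⊗[ℂ] H) :
    cOutP b ((LinearMap.lTensor H (TensorProduct.mk ℂ H H 1)) t)
      = (TensorProduct.map (LinearMap.mulLeft ℂ (S b) ∘ₗ S) LinearMap.id) t := by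
  induction t with
  | zero => simp
  | tmul a v => simp
  | add t₁ t₂ ih₁ ih₂ => simp [ih₁, ih₂]

lemma helperP (hS : ∀ x : H, S (S x) = x) (b a c : H) (t : H ⊗[ℂ] H) :
    cOutP b (a ⊗ₜ[ℂ] (LinearMap.rTensor H innP
        ((TensorProduct.assoc ℂ H H H).symm (c ⊗ₜ[ℂ] t))))
      = (TensorProduct.map (LinearMap.mulRight ℂ (S (a * b * S c)) ∘ₗ S)
          LinearMap.id) t := by
  induction t with
  | zero => simp
  | tmul x y =>
      simp only [TensorProduct.assoc_symm_tmul, LinearMap.rTensor_tmul, innP_tmul,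
        cOutP_tmul, TensorProduct.map_tmul, LinearMap.comp_apply, LinearMap.id_apply,
        LinearMap.mulRight_apply]
      rw [S_mul, S_mul, hS]
      simp [mul_assoc]
  | add t₁ t₂ ih₁ ih₂ =>
      simp only [map_add, TensorProduct.tmul_add] at *
      rw [ih₁, ih₂]

lemma AuxP (hS : ∀ x : H, S (S x) = x) (b a c d : H) :
    bigMapP b (a ⊗ₜ[ℂ] (c ⊗ₜ[ℂ] d))
      = (TensorProduct.map (LinearMap.mulRight ℂ (S (a * b * S c)) ∘ₗ S)
          LinearMap.id) (Δ d) := by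
  have h1 : bigMapP b (a ⊗ₜ[ℂ] (c ⊗ₜ[ℂ] d))
      = cOutP b (a ⊗ₜ[ℂ] (LinearMap.rTensor H innP
          ((TensorProduct.assoc ℂ H H H).symm (c ⊗ₜ[ℂ] Δ d)))) := rfl
  rw [h1, helperP hS]

/-- The key identity for the plus case. -/
lemma keyP (hS : ∀ x : H, S (S x) = x) (b h : H) :
    (TensorProduct.map (LinearMap.mulLeft ℂ (S b) ∘ₗ S) LinearMap.id) (Δ h)
      = bigMapP b (Δ2 h) := by
  have h1 : bigMapP b (Δ2 h)
      = cOutP b ((LinearMap.lTensor H GP) ((LinearMap.lTensor H Δ) (Δ h))) := rfl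
  rw [h1, ← LinearMap.comp_apply (LinearMap.lTensor H GP), ← LinearMap.lTensor_comp,
    GP_comp_comul hS, FCP]

/-! ### Maps for the minus-case exchange relation -/

/-- `innM (c ⊗ x) = S c * x`. -/
def innM : H ⊗[ℂ] H →ₗ[ℂ] H :=
  LinearMap.mul' ℂ H ∘ₗ LinearMap.rTensor H S

@[simp] lemma innM_tmul (c x : H) : innM (c ⊗ₜ[ℂ] x) = S c * x := rfl

/-- `GM (c ⊗ d) = ∑ S d₂ ⊗ (S c * d₁)`. -/
def GM : H ⊗[ℂ] H →ₗ[ℂ] H ⊗[ℂ] H :=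
  (TensorProduct.comm ℂ H H).toLinearMap ∘ₗ TensorProduct.map innM S ∘ₗ
    (TensorProduct.assoc ℂ H H H).symm.toLinearMap ∘ₗ LinearMap.lTensor H Δ

/-- `outM b (a ⊗ v) = (a * b) * v`. -/
def outM (b : H) : H ⊗[ℂ] H →ₗ[ℂ] H :=
  LinearMap.mul' ℂ H ∘ₗ LinearMap.rTensor H (LinearMap.mulRight ℂ b)

@[simp] lemma outM_tmul (b a v : H) : outM b (a ⊗ₜ[ℂ] v) = a * b * v := rfl

/-- `cOutM b (a ⊗ (u ⊗ v)) = u ⊗ (a * b * v)`. -/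
def cOutM (b : H) : H ⊗[ℂ] (H ⊗[ℂ] H) →ₗ[ℂ] H ⊗[ℂ] H :=
  (TensorProduct.comm ℂ H H).toLinearMap ∘ₗ LinearMap.rTensor H (outM b) ∘ₗ
    (TensorProduct.assoc ℂ H H H).symm.toLinearMap ∘ₗ
    LinearMap.lTensor H (TensorProduct.comm ℂ H H).toLinearMap

@[simp] lemma cOutM_tmul (b a u v : H) :
    cOutM b (a ⊗ₜ[ℂ] (u ⊗ₜ[ℂ] v)) = u ⊗ₜ[ℂ] (a * b * v) := rfl

def bigMapM (b : H) : H ⊗[ℂ] (H ⊗[ℂ] H) →ₗ[ℂ] H ⊗[ℂ] H :=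
  cOutM b ∘ₗ LinearMap.lTensor H GM

lemma innM_comp_comul :
    (innM : H ⊗[ℂ] H →ₗ[ℂ] H) ∘ₗ Δ = Algebra.linearMap ℂ H ∘ₗ ε := by
  have := HopfAlgebra.mul_antipode_rTensor_comul (R := ℂ) (A := H)
  rw [← LinearMap.comp_assoc] at this
  exact this

/-- `GM (Δ v) = S v ⊗ 1`. -/
lemma GM_comul (v : H) : GM (Δ v) = S v ⊗ₜ[ℂ] (1 : H) := by
  have h1 : GM (Δ v) = (TensorProduct.comm ℂ H H)
      (TensorProduct.map innM S
        ((TensorProduct.assoc ℂ H H H).symm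
          ((Coalgebra.comul (R := ℂ)).lTensor H (Coalgebra.comul v)))) := rfl
  rw [h1, Coalgebra.coassoc_symm_apply]
  have h2 : ∀ t : H ⊗[ℂ] H, TensorProduct.map innM S
      ((Coalgebra.comul (R := ℂ)).rTensor H t)
      = TensorProduct.map ((innM : H ⊗[ℂ] H →ₗ[ℂ] H) ∘ₗ Δ) S t := by
    intro t
    induction t with
    | zero => simp
    | tmul u w => simp
    | add t₁ t₂ ih₁ ih₂ => simp [ih₁, ih₂]
  rw [h2, innM_comp_comul]
  have h3 : ∀ t : H ⊗[ℂ] H, TensorProduct.map (Algebra.linearMap ℂ H ∘ₗ (ε : H →ₗ[ℂ] ℂ)) S t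
      = TensorProduct.map (Algebra.linearMap ℂ H) S ((ε : H →ₗ[ℂ] ℂ).rTensor H t) := by
    intro t
    induction t with
    | zero => simp
    | tmul u w => simp
    | add t₁ t₂ ih₁ ih₂ => simp only [map_add, ih₁, ih₂]
  rw [h3, Coalgebra.rTensor_counit_comul]
  simp

lemma GM_comp_comul :
    GM ∘ₗ (Δ : H →ₗ[ℂ] H ⊗[ℂ] H)
      = ((TensorProduct.mk ℂ H H).flip 1) ∘ₗ S :=
  LinearMap.ext fun v => by simpa using GM_comul v

lemma FCM (b : H) (t : H ⊗[ℂ] H) :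
    cOutM b ((LinearMap.lTensor H (((TensorProduct.mk ℂ H H).flip 1) ∘ₗ S)) t)
      = (TensorProduct.map S (LinearMap.mulRight ℂ b))
          ((TensorProduct.comm ℂ H H) t) := by
  induction t with
  | zero => simp
  | tmul a v => simp
  | add t₁ t₂ ih₁ ih₂ => simp [ih₁, ih₂]

lemma helperM (b a c : H) (t : H ⊗[ℂ] H) :
    cOutM b (a ⊗ₜ[ℂ] ((TensorProduct.comm ℂ H H)
        (TensorProduct.map innM S ((TensorProduct.assoc ℂ H H H).symm (c ⊗ₜ[ℂ] t)))))
      = (TensorProduct.map S (LinearMap.mulLeft ℂ (a * b * S c)))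
          ((TensorProduct.comm ℂ H H) t) := by
  induction t with
  | zero => simp
  | tmul x y =>
      simp only [TensorProduct.assoc_symm_tmul, TensorProduct.map_tmul, innM_tmul,
        TensorProduct.comm_tmul, cOutM_tmul, LinearMap.mulLeft_apply]
      simp [mul_assoc]
  | add t₁ t₂ ih₁ ih₂ =>
      simp only [map_add, TensorProduct.tmul_add] at *
      rw [ih₁, ih₂]

lemma AuxM (b a c d : H) :
    bigMapM b (a ⊗ₜ[ℂ] (c ⊗ₜ[ℂ] d))
      = (TensorProduct.map S (LinearMap.mulLeft ℂ (a * b * S c)))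
          ((TensorProduct.comm ℂ H H) (Δ d)) := by
  have h1 : bigMapM b (a ⊗ₜ[ℂ] (c ⊗ₜ[ℂ] d))
      = cOutM b (a ⊗ₜ[ℂ] ((TensorProduct.comm ℂ H H)
          (TensorProduct.map innM S
            ((TensorProduct.assoc ℂ H H H).symm (c ⊗ₜ[ℂ] Δ d))))) := rfl
  rw [h1, helperM]

/-- The key identity for the minus case. -/
lemma keyM (b h : H) :
    (TensorProduct.map S (LinearMap.mulRight ℂ b)) ((TensorProduct.comm ℂ H H) (Δ h))
      = bigMapM b (Δ2 h) := by
  have h1 : bigMapM b (Δ2 h)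
      = cOutM b ((LinearMap.lTensor H GM) ((LinearMap.lTensor H Δ) (Δ h))) := rfl
  rw [h1, ← LinearMap.comp_apply (LinearMap.lTensor H GM), ← LinearMap.lTensor_comp,
    GM_comp_comul, FCM]

/-! ### Sandwich rewriting lemmas -/

lemma sand_mulLeft (c : H) (t : H ⊗[ℂ] H) (x : H) :
    c * sandwich t x
      = sandwich ((TensorProduct.map (LinearMap.mulLeft ℂ c) LinearMap.id) t) x := by
  induction t with
  | zero => simp
  | tmul u v => simp [mul_assoc]
  | add t₁ t₂ ih₁ ih₂ => simp [mul_add, ih₁, ih₂]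

lemma sand_argLeft (c : H) (t : H ⊗[ℂ] H) (x : H) :
    sandwich t (c * x)
      = sandwich ((TensorProduct.map (LinearMap.mulRight ℂ c) LinearMap.id) t) x := by
  induction t with
  | zero => simp
  | tmul u v => simp [mul_assoc]
  | add t₁ t₂ ih₁ ih₂ => simp [ih₁, ih₂]

lemma sand_mulRight (c : H) (t : H ⊗[ℂ] H) (x : H) :
    sandwich t x * c
      = sandwich ((TensorProduct.map LinearMap.id (LinearMap.mulRight ℂ c)) t) x := by
  induction t with
  | zero => simp
  | tmul u v => simp [mul_assoc]
  | add t₁ t₂ ih₁ ih₂ => simp [add_mul, ih₁, ih₂]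

lemma sand_argRight (c : H) (t : H ⊗[ℂ] H) (x : H) :
    sandwich t (x * c)
      = sandwich ((TensorProduct.map LinearMap.id (LinearMap.mulLeft ℂ c)) t) x := by
  induction t with
  | zero => simp
  | tmul u v => simp [mul_assoc]
  | add t₁ t₂ ih₁ ih₂ => simp [ih₁, ih₂]

lemma mapmap_left (f f' : H →ₗ[ℂ] H) (t : H ⊗[ℂ] H) :
    (TensorProduct.map f LinearMap.id) ((TensorProduct.map f' LinearMap.id) t)
      = (TensorProduct.map (f ∘ₗ f') LinearMap.id) t := by
  rw [← LinearMap.comp_apply, ← TensorProduct.map_comp, LinearMap.id_comp]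

lemma mapmap_right (g f : H →ₗ[ℂ] H) (t : H ⊗[ℂ] H) :
    (TensorProduct.map LinearMap.id g) ((TensorProduct.map f LinearMap.id) t)
      = (TensorProduct.map f g) t := by
  rw [← LinearMap.comp_apply, ← TensorProduct.map_comp, LinearMap.id_comp,
    LinearMap.comp_id]

end AuxHopf

/-- (Straightening/exchange relation on an edge.) For all `h, b ∈ H`,
both sign choices, and every Sweedler representation `Δ² h = Σ h₁ ⊗ h₂ ⊗ h₃`, the edge
operators satisfy `L^h_± ∘ T^b_± = Σ T^{h₁ b S(h₂)}_± ∘ L^{h₃}_±` as operators on `H*`,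
realizing the commutation relation `h b = (h₁ b S(h₂)) h₃` of `M(H)`. -/
theorem statement9 [FiniteDimensional ℂ H] (hS : ∀ x : H, S (S x) = x) :
    ∀ (h b : H) (ι : Type) (s : Finset ι) (h1 h2 h3 : ι → H),
      (∑ i ∈ s, h1 i ⊗ₜ[ℂ] (h2 i ⊗ₜ[ℂ] h3 i)) = Δ2 h →
      (Lp h ∘ₗ Tp b = ∑ i ∈ s, Tp (h1 i * b * S (h2 i)) ∘ₗ Lp (h3 i)) ∧
      (Lm h ∘ₗ Tm b = ∑ i ∈ s, Tm (h1 i * b * S (h2 i)) ∘ₗ Lm (h3 i)) := by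
  intro h b ι s h1 h2 h3 hrep
  have keyPlus : (TensorProduct.map (LinearMap.mulLeft ℂ (S b) ∘ₗ S) LinearMap.id) (Δ h)
      = ∑ i ∈ s, (TensorProduct.map
          (LinearMap.mulRight ℂ (S (h1 i * b * S (h2 i))) ∘ₗ S) LinearMap.id)
          (Δ (h3 i)) := by
    rw [keyP hS b h, ← hrep, map_sum]
    exact Finset.sum_congr rfl fun i _ => AuxP hS b _ _ _
  have keyMinus : (TensorProduct.map S (LinearMap.mulRight ℂ b))
        ((TensorProduct.comm ℂ H H) (Δ h))
      = ∑ i ∈ s, (TensorProduct.map S (LinearMap.mulLeft ℂ (h1 i * b * S (h2 i))))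
          ((TensorProduct.comm ℂ H H) (Δ (h3 i))) := by
    rw [keyM b h, ← hrep, map_sum]
    exact Finset.sum_congr rfl fun i _ => AuxM b _ _ _
  constructor
  · refine LinearMap.ext fun φ => LinearMap.ext fun x => ?_
    have lhs : (Lp h ∘ₗ Tp b) φ x
        = φ (sandwich ((TensorProduct.map (LinearMap.mulLeft ℂ (S b) ∘ₗ S)
            LinearMap.id) (Δ h)) x) := by
      simp only [LinearMap.comp_apply, Lp, Tp, LinearMap.dualMap_apply,
        LinearMap.mulLeft_apply]
      rw [sand_mulLeft, mapmap_left]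
    rw [lhs, keyPlus, map_sum, LinearMap.sum_apply, map_sum]
    simp only [LinearMap.sum_apply, LinearMap.comp_apply]
    refine Finset.sum_congr rfl fun i _ => ?_
    simp only [Lp, Tp, LinearMap.dualMap_apply, LinearMap.mulLeft_apply]
    rw [sand_argLeft, mapmap_left]
  · refine LinearMap.ext fun φ => LinearMap.ext fun x => ?_
    have lhs : (Lm h ∘ₗ Tm b) φ x
        = φ (sandwich ((TensorProduct.map S (LinearMap.mulRight ℂ b))
            ((TensorProduct.comm ℂ H H) (Δ h))) x) := by
      simp only [LinearMap.comp_apply, Lm, Tm, LinearMap.dualMap_apply,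
        LinearMap.mulRight_apply]
      rw [sand_mulRight, mapmap_right]
    rw [lhs, keyMinus, map_sum, LinearMap.sum_apply, map_sum]
    simp only [LinearMap.sum_apply, LinearMap.comp_apply]
    refine Finset.sum_congr rfl fun i _ => ?_
    simp only [Lm, Tm, LinearMap.dualMap_apply, LinearMap.mulRight_apply]
    rw [sand_argRight, mapmap_right]


end SemidualKitaev
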